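/- Soundness of the executable frame-stack operations: for every configuration σ, either pushf σ ∋ UB or pushf σ ∋ pushf^run σ; and either popf σ ∋ UB or popf σ ∋ popf^run σ. -/

import Mathlib

/-! Executable memory model (instantiated at the concrete address type ℤ)
and its nondeterministic specification. -/

/-- Pointers: an address tagged with a provenance (`Option ℕ`, `none` is the wildcard). -/
structure PtrZ where
  a : ℤ
  pr : Option ℕ
deriving DecidableEq

/-- Memory configurations: a finite memory map, heap block map, frame stack, and
the set of used provenances. -/
structure ConfZ (SByte : Type) where
  mem : Finmap fun _ : ℤ => SByte × Option ℕ
  heap : Finmap fun _ : ℤ => List PtrZ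
  stack : List (List PtrZ)
  used : Finset ℕ

/-- Possible outcomes of a memory operation. -/
inductive ErrUbOom (A : Type) where
  | UB
  | OOM
  | FAIL
  | ok (a : A)

/-- The (nondeterministic, propositional) specification monad. -/
abbrev MemPropT (SByte X : Type) : Type :=
  ConfZ SByte → Set (ErrUbOom (ConfZ SByte × X))

/-- The (deterministic) executable monad. -/
abbrev MemExec (SByte X : Type) : Type :=
  ConfZ SByte → ErrUbOom (ConfZ SByte × X)

/-- `σ.mem[p] ≐ b`: address `p.a` maps to byte `b` with provenance `p.pr`. -/
def readByteAt {SByte : Type} (σ : ConfZ SByte) (p : PtrZ) (b : SByte) : Prop :=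
  σ.mem.lookup p.a = some (b, p.pr)

/-- A pointer is accessible in memory. -/
def accessible {SByte : Type} (σ : ConfZ SByte) (p : PtrZ) : Prop :=
  ∃ b, readByteAt σ p b

/-- Boolean accessibility check (used by the executable implementations). -/
def accessibleB {SByte : Type} (σ : ConfZ SByte) (p : PtrZ) : Bool :=
  match σ.mem.lookup p.a with
  | some (_, pr) => decide (pr = p.pr)
  | none => false

/-- The two memories agree on content and provenance at all addresses except those
of the pointers in `ps`. -/
def memEqExcept {SByte : Type} (σ1 σ2 : ConfZ SByte) (ps : List PtrZ) : Prop :=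
  ∀ (p' : PtrZ) (b : SByte),
    (∀ p ∈ ps, p'.a ≠ p.a) → (readByteAt σ1 p' b ↔ readByteAt σ2 p' b)


/-- Remove all addresses of a block of pointers from memory. -/
def eraseBlock {SByte : Type} (m : Finmap fun _ : ℤ => SByte × Option ℕ)
    (ps : List PtrZ) : Finmap fun _ : ℤ => SByte × Option ℕ :=
  ps.foldl (fun m' q => m'.erase q.a) m

/-- Specification of pushing a stack frame: an empty frame is pushed on the stack,
nothing else changes (`OOM` is always allowed). -/
def pushfSpec {SByte : Type} : MemPropT SByte Unit :=
  fun σ1 =>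
    { beh | beh = .OOM
          ∨ ∃ σ2 : ConfZ SByte,
              σ2.mem = σ1.mem ∧ σ2.heap = σ1.heap ∧ σ2.used = σ1.used ∧
              σ2.stack = ([] : List PtrZ) :: σ1.stack ∧
              beh = .ok (σ2, ()) }

/-- Specification of popping the top stack frame: the top frame `ps` is popped, all its
pointers must be accessible; their addresses are unmapped from memory and nothing else
changes (`UB` in the complementary cases; `OOM` is always allowed). -/
def popfSpec {SByte : Type} : MemPropT SByte Unit :=
  fun σ1 =>
    { beh | beh = .OOM
          ∨ ((σ1.stack = [] ∨
              ∃ f rest, σ1.stack = f :: rest ∧ ∃ q ∈ f, ¬ accessible σ1 q) ∧ beh = .UB)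
          ∨ ∃ (σ2 : ConfZ SByte) (ps : List PtrZ),
              σ2.heap = σ1.heap ∧ σ2.used = σ1.used ∧
              σ1.stack = ps :: σ2.stack ∧
              (∀ q ∈ ps, accessible σ1 q ∧ σ2.mem.lookup q.a = none) ∧
              memEqExcept σ1 σ2 ps ∧
              beh = .ok (σ2, ()) }

/-- Executable frame push: a deterministic function mirroring the specification. -/
def pushfRun {SByte : Type} : MemExec SByte Unit :=
  fun σ => .ok ({ σ with stack := ([] : List PtrZ) :: σ.stack }, ())

/-- Executable frame pop: a deterministic function mirroring the specification. -/
def popfRun {SByte : Type} : MemExec SByte Unit :=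
  fun σ =>
    match σ.stack with
    | [] => .UB
    | ps :: rest =>
        if ps.all (accessibleB σ) then
          .ok ({ σ with mem := eraseBlock σ.mem ps, stack := rest }, ())
        else .UB


lemma accessibleB_iff {SByte : Type} (σ : ConfZ SByte) (p : PtrZ) :
    accessibleB σ p = true ↔ accessible σ p := by
  unfold accessibleB accessible readByteAt
  rcases h : σ.mem.lookup p.a with _ | ⟨b, pr⟩
  · simp
  simp only [decide_eq_true_eq]
  constructor
  · rintro rfl; exact ⟨b, rfl⟩
  · rintro ⟨b', hb⟩; cases hb; rfl

lemma eraseBlock_lookup_not_mem {SByte : Type}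
    (m : Finmap fun _ : ℤ => SByte × Option ℕ) (ps : List PtrZ) (a : ℤ)
    (h : ¬ ∃ p ∈ ps, a = p.a) : (eraseBlock m ps).lookup a = m.lookup a := by
  induction ps generalizing m with
  | nil => rfl
  | cons q qs ih =>
    push_neg at h
    show (eraseBlock (m.erase q.a) qs).lookup a = m.lookup a
    rw [ih _ (by push_neg; exact fun p hp => h p (List.mem_cons_of_mem _ hp)),
      Finmap.lookup_erase_ne (h q List.mem_cons_self)]

lemma eraseBlock_lookup_mem {SByte : Type}
    (m : Finmap fun _ : ℤ => SByte × Option ℕ) (ps : List PtrZ) (a : ℤ)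
    (h : ∃ p ∈ ps, a = p.a) : (eraseBlock m ps).lookup a = none := by
  induction ps generalizing m with
  | nil => simp at h
  | cons q qs ih =>
    rcases h with ⟨p, hp, rfl⟩
    rcases List.mem_cons.1 hp with rfl | hp
    · show (eraseBlock (m.erase p.a) qs).lookup p.a = none
      by_cases h2 : ∃ p' ∈ qs, p.a = p'.a
      · exact ih _ h2
      · rw [eraseBlock_lookup_not_mem _ _ _ h2, Finmap.lookup_erase]
    · exact ih _ ⟨p, hp, rfl⟩

/-- Soundness of the executable frame-stack operations: for every configuration `σ`,
either `pushf σ ∋ UB` or `pushf σ ∋ pushf^run σ`; and either `popf σ ∋ UB` or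
`popf σ ∋ popf^run σ`. -/
theorem frame_stack_run_sound {SByte : Type} (σ : ConfZ SByte) :
    (ErrUbOom.UB ∈ pushfSpec σ ∨ pushfRun σ ∈ pushfSpec σ) ∧
    (ErrUbOom.UB ∈ popfSpec σ ∨ popfRun σ ∈ popfSpec σ) := by
  constructor
  · right
    refine Or.inr ⟨{ σ with stack := [] :: σ.stack }, rfl, rfl, rfl, rfl, rfl⟩
  · rcases hs : σ.stack with _ | ⟨ps, rest⟩
    · left; exact Or.inr (Or.inl ⟨Or.inl hs, rfl⟩)
    · by_cases hall : ps.all (accessibleB σ)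
      · right
        unfold popfRun
        rw [hs]
        simp only [hall, if_true]
        refine Or.inr (Or.inr ⟨{ σ with mem := eraseBlock σ.mem ps, stack := rest }, ps, rfl, rfl, hs, ?_, ?_, rfl⟩)
        · intro q hq
          refine ⟨(accessibleB_iff σ q).1 (List.all_eq_true.1 hall q hq), ?_⟩
          exact eraseBlock_lookup_mem _ _ _ ⟨q, hq, rfl⟩
        · intro p' b hne
          unfold readByteAt
          show _ ↔ (eraseBlock σ.mem ps).lookup p'.a = _
          rw [eraseBlock_lookup_not_mem _ _ _ (by push_neg; exact hne)]
      · left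
        refine Or.inr (Or.inl ⟨Or.inr ⟨ps, rest, hs, ?_⟩, rfl⟩)
        have : ∃ q ∈ ps, ¬ accessibleB σ q = true := by
          by_contra h; push_neg at h
          exact hall (List.all_eq_true.2 h)
        rcases this with ⟨q, hq, hq2⟩
        exact ⟨q, hq, fun h => hq2 ((accessibleB_iff σ q).2 h)⟩
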